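/- Let I be a homogeneous ideal whose generic initial ideal gin(I) (with respect to the reverse lexicographic order) has no minimal generator of degree δ. Then gin(I_{≤δ}) = (gin(I))_{≤δ}. -/

import Mathlib

open MvPolynomial

variable {K : Type} [Field K] {m : ℕ}

/-- `I` is a monomial ideal. -/
def IsMonomialIdeal (I : Ideal (MvPolynomial (Fin m) K)) : Prop :=
  ∀ f ∈ I, ∀ p ∈ f.support, (monomial p (1 : K)) ∈ I

/-- `x^p` is a minimal (monomial) generator of `I`. -/
def IsMinGen (I : Ideal (MvPolynomial (Fin m) K)) (p : Fin m →₀ ℕ) : Prop :=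
  monomial p (1 : K) ∈ I ∧ ∀ q : Fin m →₀ ℕ, q ≤ p → q ≠ p → monomial q (1 : K) ∉ I

/-- Total degree of an exponent vector. -/
def rdeg (p : Fin m →₀ ℕ) : ℕ := p.sum fun _ e => e

/-- The ideal generated by the homogeneous elements of `I` of degree `≤ d`. -/
noncomputable def Ile (I : Ideal (MvPolynomial (Fin m) K)) (d : ℕ) : Ideal (MvPolynomial (Fin m) K) :=
  Ideal.span {f | f ∈ I ∧ ∃ e ≤ d, f.IsHomogeneous e}

/-- The ideal generated by the homogeneous elements of `I` of degree `< d`. -/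
noncomputable def Ilt (I : Ideal (MvPolynomial (Fin m) K)) (d : ℕ) : Ideal (MvPolynomial (Fin m) K) :=
  Ideal.span {f | f ∈ I ∧ ∃ e < d, f.IsHomogeneous e}

/-- The Hilbert function of an ideal: the dimension of its degree `t` graded piece. -/
noncomputable def hilb (I : Ideal (MvPolynomial (Fin m) K)) (t : ℕ) : ℕ :=
  Module.finrank K
    ↥(Submodule.restrictScalars K (I : Submodule (MvPolynomial (Fin m) K) (MvPolynomial (Fin m) K))
      ⊓ homogeneousSubmodule (Fin m) K t)

lemma rdeg_eq_degree (p : Fin m →₀ ℕ) : rdeg p = p.degree := rfl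

lemma homog_fd (t : ℕ) : FiniteDimensional K (homogeneousSubmodule (Fin m) K t) := by
  apply Submodule.finiteDimensional_of_le (S₂ := restrictTotalDegree (Fin m) K t)
  intro f hf
  rw [mem_restrictTotalDegree]
  exact ((mem_homogeneousSubmodule _ _).mp hf).totalDegree_le

lemma Ile_le (J : Ideal (MvPolynomial (Fin m) K)) (d : ℕ) : Ile J d ≤ J :=
  Ideal.span_le.mpr fun _ hf => hf.1

lemma Ilt_le_Ile (J : Ideal (MvPolynomial (Fin m) K)) (d : ℕ) : Ilt J d ≤ Ile J d :=
  Ideal.span_mono fun f ⟨h1, e, he, h2⟩ => ⟨h1, e, he.le, h2⟩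

lemma piece (J : Ideal (MvPolynomial (Fin m) K)) {d t : ℕ} (h : t ≤ d) :
    Submodule.restrictScalars K ((Ile J d : Ideal _) : Submodule (MvPolynomial (Fin m) K) _)
      ⊓ homogeneousSubmodule (Fin m) K t
    = Submodule.restrictScalars K (J : Submodule (MvPolynomial (Fin m) K) _)
      ⊓ homogeneousSubmodule (Fin m) K t := by
  apply le_antisymm
  · exact inf_le_inf_right _ (fun f hf => Ile_le J d hf)
  · rintro f ⟨hfJ, hfh⟩
    exact ⟨Ideal.subset_span ⟨hfJ, t, h, (mem_homogeneousSubmodule _ _).mp hfh⟩, hfh⟩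

lemma hilb_Ile (J : Ideal (MvPolynomial (Fin m) K)) {d t : ℕ} (h : t ≤ d) :
    hilb (Ile J d) t = hilb J t := by
  unfold hilb; rw [piece J h]

lemma rdeg_lt {q p : Fin m →₀ ℕ} (hle : q ≤ p) (hne : q ≠ p) : rdeg q < rdeg p := by
  have h : ∀ i, q i ≤ p i := fun i => hle i
  have hlt : ∃ i, q i < p i := by
    by_contra hc
    push_neg at hc
    exact hne (Finsupp.ext fun i => le_antisymm (h i) (hc i))
  obtain ⟨i, hi⟩ := hlt
  have hq : rdeg q = ∑ j ∈ q.support ∪ p.support, q j :=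
    Finset.sum_subset Finset.subset_union_left
      (fun x _ hx => Finsupp.notMem_support_iff.mp hx)
  have hp : rdeg p = ∑ j ∈ q.support ∪ p.support, p j :=
    Finset.sum_subset Finset.subset_union_right
      (fun x _ hx => Finsupp.notMem_support_iff.mp hx)
  rw [hq, hp]
  apply Finset.sum_lt_sum (fun j _ => h j)
  refine ⟨i, Finset.mem_union_right _ (Finsupp.mem_support_iff.mpr ?_), hi⟩
  omega

/-- If a monomial ideal has no minimal generator of degree `δ`, its `≤ δ` truncation agrees
with its `< δ` truncation. -/
lemma Ile_eq_Ilt {J : Ideal (MvPolynomial (Fin m) K)} {δ : ℕ} (hJ : IsMonomialIdeal J)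
    (hgap : ∀ p, IsMinGen J p → rdeg p ≠ δ) : Ile J δ = Ilt J δ := by
  refine le_antisymm ?_ (Ilt_le_Ile J δ)
  rw [Ile, Ideal.span_le]
  rintro f ⟨hfJ, e, he, hfe⟩
  rcases lt_or_eq_of_le he with hlt | heq
  · exact Ideal.subset_span ⟨hfJ, e, hlt, hfe⟩
  rw [heq] at hfe
  have hmono : ∀ p ∈ f.support, monomial p (f.coeff p) ∈ Ilt J δ := by
    intro p hp
    have hpJ : monomial p (1 : K) ∈ J := hJ f hfJ p hp
    have hpd : rdeg p = δ := by
      have h := hfe (Finsupp.mem_support_iff.mp hp)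
      rw [rdeg_eq_degree, Finsupp.degree_eq_weight_one]
      exact h
    have hnotmin : ¬ IsMinGen J p := fun h => hgap p h hpd
    rw [IsMinGen] at hnotmin
    push_neg at hnotmin
    obtain ⟨q, hqle, hqne, hqJ⟩ := hnotmin hpJ
    have hq : monomial q (1 : K) ∈ Ilt J δ := by
      apply Ideal.subset_span
      refine ⟨hqJ, rdeg q, ?_, ?_⟩
      · rw [← hpd]; exact rdeg_lt hqle hqne
      · exact isHomogeneous_monomial (1 : K) (rdeg_eq_degree q).symm
    have hsplit : monomial p (f.coeff p) = monomial (p - q) (f.coeff p) * monomial q 1 := by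
      rw [monomial_mul, mul_one, tsub_add_cancel_of_le hqle]
    rw [hsplit]
    exact Ideal.mul_mem_left _ _ hq
  have hf : f = ∑ p ∈ f.support, monomial p (f.coeff p) := f.as_sum
  rw [hf]
  exact Submodule.sum_mem _ hmono

/-- Let `gin` be the generic initial ideal operation for the reverse lexicographic order over an
algebraically closed field; it takes monomial (Borel-fixed) values, preserves Hilbert functions,
and satisfies Green's theorem: if `gin I` has no minimal generator of degree `d` (a gap), then
`gin (I_(<d)) = (gin I)_(<d)`.  If `gin I` has a gap in degree `δ`, then
`gin (I_(≤δ)) = (gin I)_(≤δ)`. -/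
theorem stmt5 [IsAlgClosed K] (gin : Ideal (MvPolynomial (Fin m) K) → Ideal (MvPolynomial (Fin m) K))
    (hmon : ∀ J, IsMonomialIdeal (gin J))
    (hHilb : ∀ (J : Ideal (MvPolynomial (Fin m) K)) (t : ℕ), hilb J t = hilb (gin J) t)
    (hGreen : ∀ (J : Ideal (MvPolynomial (Fin m) K)) (d : ℕ),
      (∀ p, IsMinGen (gin J) p → rdeg p ≠ d) → gin (Ilt J d) = Ilt (gin J) d)
    (I : Ideal (MvPolynomial (Fin m) K)) (δ : ℕ)
    (hgap : ∀ p, IsMinGen (gin I) p → rdeg p ≠ δ) :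
    gin (Ile I δ) = Ile (gin I) δ := by
  have hB : Ile (gin I) δ = Ilt (gin I) δ := Ile_eq_Ilt (hmon I) hgap
  have hdim : hilb (Ilt I δ) δ = hilb (Ile I δ) δ := by
    calc hilb (Ilt I δ) δ = hilb (gin (Ilt I δ)) δ := hHilb _ _
    _ = hilb (Ilt (gin I) δ) δ := by rw [hGreen I δ hgap]
    _ = hilb (Ile (gin I) δ) δ := by rw [hB]
    _ = hilb (gin I) δ := hilb_Ile _ le_rfl
    _ = hilb I δ := (hHilb I δ).symm
    _ = hilb (Ile I δ) δ := (hilb_Ile I le_rfl).symm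
  have hfd : FiniteDimensional K
      ↥(Submodule.restrictScalars K ((Ile I δ : Ideal _) : Submodule (MvPolynomial (Fin m) K) _)
        ⊓ homogeneousSubmodule (Fin m) K δ) := by
    have := homog_fd (K := K) (m := m) δ
    exact Submodule.finiteDimensional_of_le inf_le_right
  have hle : (Submodule.restrictScalars K ((Ilt I δ : Ideal _) : Submodule (MvPolynomial (Fin m) K) _)
        ⊓ homogeneousSubmodule (Fin m) K δ)
      ≤ (Submodule.restrictScalars K ((Ile I δ : Ideal _) : Submodule (MvPolynomial (Fin m) K) _)
        ⊓ homogeneousSubmodule (Fin m) K δ) :=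
    inf_le_inf_right _ (fun f hf => Ilt_le_Ile I δ hf)
  have hpieceeq := Submodule.eq_of_le_of_finrank_eq hle hdim
  have hA : Ile I δ = Ilt I δ := by
    refine le_antisymm ?_ (Ilt_le_Ile I δ)
    rw [Ile, Ideal.span_le]
    rintro f ⟨hfI, e, he, hfe⟩
    rcases lt_or_eq_of_le he with hlt | heq
    · exact Ideal.subset_span ⟨hfI, e, hlt, hfe⟩
    rw [heq] at hfe
    have hfmem : f ∈ (Submodule.restrictScalars K ((Ile I δ : Ideal _) : Submodule (MvPolynomial (Fin m) K) _)
        ⊓ homogeneousSubmodule (Fin m) K δ) :=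
      ⟨Ideal.subset_span ⟨hfI, δ, le_rfl, hfe⟩, (mem_homogeneousSubmodule _ _).mpr hfe⟩
    rw [← hpieceeq] at hfmem
    exact hfmem.1
  rw [hA, hGreen I δ hgap, ← hB]
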